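/- arXiv:1212.2893 — 7 statements merged into one kernel-verified Lean document; each statement's English description precedes it below -/
import Mathlib

section
/- (Proposition 1(a), necessary condition for finite population learning.) Under the learning setup, if (1/n)·∑_{i=1}^n erf(ε·√((ρ + ρ̄·k_i)/2)) < (1 − ε̄)·(1 − δ), then (ε, ε̄, δ)-learning does not occur; in fact P({ω : (1/n)·|{i : ω ∉ A_i}| ≥ ε̄}) > δ. -/
/-!
By Markov's inequality applied to the number `S ω` of agents whose estimate is within `ε`,
whose expectation is `∑ᵢ P(Aᵢ) = ∑ᵢ erf(ε √((ρ + ρ̄ kᵢ)/2))`, the event `S ≥ n(1 - ε̄)` has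
probability at most `(1/n) ∑ᵢ erf(…) / (1 - ε̄) < 1 - δ`. Outside this event more than a
fraction `ε̄` of the agents err, so that happens with probability greater than `δ`.
-/

open MeasureTheory Filter
open scoped Classical

/-- The error function `erf x = (2/√π) ∫₀ˣ e^{-t²} dt`. -/
noncomputable def erf (x : ℝ) : ℝ :=
  (2 / Real.sqrt Real.pi) * ∫ t in (0:ℝ)..x, Real.exp (-t ^ 2)

lemma erf_nonneg {x : ℝ} (hx : 0 ≤ x) : 0 ≤ erf x :=
  mul_nonneg (by positivity)
    (intervalIntegral.integral_nonneg hx fun t _ => (Real.exp_pos _).le)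

section CountingEvents

open Finset

variable {ι Ω : Type*} [Fintype ι]

lemma card_filter_mem_eq_sum_indicator (A : ι → Set Ω) (ω : Ω) :
    (#{i | ω ∈ A i} : ℝ) = ∑ i, (A i).indicator 1 ω := by
  simp only [natCast_card_filter, Set.indicator_apply, Pi.one_apply]

lemma integral_card_filter_mem [MeasurableSpace Ω] (μ : Measure Ω) [IsFiniteMeasure μ]
    {A : ι → Set Ω} (hA : ∀ i, MeasurableSet (A i)) :
    ∫ ω, (#{i | ω ∈ A i} : ℝ) ∂μ = ∑ i, μ.real (A i) := by
  simp_rw [card_filter_mem_eq_sum_indicator]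
  rw [integral_finsetSum _ fun i _ => (integrable_const 1).indicator (hA i)]
  exact sum_congr rfl fun i _ => integral_indicator_one (hA i)

lemma mul_measureReal_le_card_filter_mem_le_sum [MeasurableSpace Ω] (μ : Measure Ω)
    [IsFiniteMeasure μ] {A : ι → Set Ω} (hA : ∀ i, MeasurableSet (A i)) (c : ℝ) :
    c * μ.real {ω | c ≤ #{i | ω ∈ A i}} ≤ ∑ i, μ.real (A i) := by
  have hint : Integrable (fun ω => (#{i | ω ∈ A i} : ℝ)) μ := by
    simp_rw [card_filter_mem_eq_sum_indicator]
    exact integrable_finsetSum _ fun i _ => (integrable_const 1).indicator (hA i)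
  rw [← integral_card_filter_mem μ hA]
  exact mul_meas_ge_le_integral_of_nonneg (ae_of_all _ fun _ => Nat.cast_nonneg _) hint c

end CountingEvents

theorem stmt_1_general (n : ℕ) (hn : 1 ≤ n) (ε εbar δ ρ ρbar : ℝ)
    (hε : 0 < ε) (hεbar : εbar ∈ Set.Ioo (0:ℝ) 1) (hδ : δ ∈ Set.Ioo (0:ℝ) 1)
    (k : Fin n → ℕ)
    {Ω : Type*} [MeasurableSpace Ω] (P : Measure Ω) [IsProbabilityMeasure P]
    (A : Fin n → Set Ω) (hmA : ∀ i, MeasurableSet (A i))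
    (hPA : ∀ i, P (A i) = ENNReal.ofReal (erf (ε * Real.sqrt ((ρ + ρbar * k i) / 2))))
    (hcond : (1 / n : ℝ) * ∑ i, erf (ε * Real.sqrt ((ρ + ρbar * k i) / 2))
        < (1 - εbar) * (1 - δ)) :
    ENNReal.ofReal δ <
      P {ω | εbar ≤ (1 / n : ℝ) * ((Finset.univ.filter fun i => ω ∉ A i).card : ℝ)} := by
  set B := {ω | εbar ≤ (1 / n : ℝ) * ((Finset.univ.filter fun i => ω ∉ A i).card : ℝ)}
  set c : ℝ := n * (1 - εbar)
  set G := {ω | c ≤ (Finset.univ.filter fun i => ω ∈ A i).card}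
  have hn' : (0 : ℝ) < n := by exact_mod_cast hn
  have hc : 0 < c := mul_pos hn' (sub_pos.mpr hεbar.2)
  have hPA_real : ∀ i, P.real (A i) = erf (ε * Real.sqrt ((ρ + ρbar * k i) / 2)) := fun i => by
    rw [measureReal_def, hPA, ENNReal.toReal_ofReal (erf_nonneg (by positivity))]
  have hPG : P.real G < 1 - δ := by
    refine lt_of_mul_lt_mul_left ?_ hc.le
    calc c * P.real G ≤ ∑ i, P.real (A i) := mul_measureReal_le_card_filter_mem_le_sum P hmA c
      _ < c * (1 - δ) := by
        rw [one_div, inv_mul_lt_iff₀ hn'] at hcond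
        simp only [hPA_real, c]
        linarith
  have hcover : Set.univ ⊆ B ∪ G := by
    intro ω _
    by_contra hω
    simp only [Set.mem_union, Set.mem_ofPred_eq, B, G, not_or, not_le] at hω
    have hsum : ((Finset.univ.filter fun i => ω ∈ A i).card : ℝ)
        + (Finset.univ.filter fun i => ω ∉ A i).card = n := by
      exact_mod_cast (Finset.card_filter_add_card_filter_not _).trans (Finset.card_fin n)
    rw [one_div, inv_mul_lt_iff₀ hn'] at hω
    linarith [hω.1, hω.2]
  have hPB : δ < P.real B := by
    have := (probReal_univ (μ := P)).symm.le.trans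
      ((measureReal_mono hcover).trans (measureReal_union_le B G))
    linarith
  exact (ENNReal.ofReal_lt_iff_lt_toReal hδ.1.le (measure_ne_top P B)).mpr hPB

/-- Proposition 1(a): necessary condition for finite population learning.
If the average of `erf (ε √((ρ + ρ̄ kᵢ)/2))` is below `(1-ε̄)(1-δ)`, then the
probability that at least a fraction `ε̄` of agents err is strictly larger
than `δ`, i.e. `(ε, ε̄, δ)`-learning fails. -/
theorem stmt_1 (n : ℕ) (hn : 1 ≤ n) (ε εbar δ ρ ρbar : ℝ)
    (hε : 0 < ε) (hεbar : εbar ∈ Set.Ioo (0:ℝ) 1) (hδ : δ ∈ Set.Ioo (0:ℝ) 1)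
    (hρ : 0 < ρ) (hρbar : 0 < ρbar)
    (k : Fin n → ℕ) (hk : ∀ i, 1 ≤ k i)
    {Ω : Type*} [MeasurableSpace Ω] (P : Measure Ω) [IsProbabilityMeasure P]
    (A : Fin n → Set Ω) (hmA : ∀ i, MeasurableSet (A i))
    (hPA : ∀ i, P (A i) = ENNReal.ofReal (erf (ε * Real.sqrt ((ρ + ρbar * k i) / 2))))
    (hcond : (1 / n : ℝ) * ∑ i, erf (ε * Real.sqrt ((ρ + ρbar * k i) / 2))
        < (1 - εbar) * (1 - δ)) :
    ENNReal.ofReal δ <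
      P {ω | εbar ≤ (1 / n : ℝ) * ((Finset.univ.filter fun i => ω ∉ A i).card : ℝ)} :=
  stmt_1_general n hn ε εbar δ ρ ρbar hε hεbar hδ k P A hmA hPA hcond
end

section
/- (Proposition 1(b), sufficient condition for finite population learning.) Under the learning setup, if (1/n)·∑_{i=1}^n erf(ε·√((ρ + ρ̄·k_i)/2)) ≥ 1 − ε̄·δ, then (ε, ε̄, δ)-learning occurs, i.e. P({ω : (1/n)·|{i : ω ∉ A_i}| ≥ ε̄}) ≤ δ. -/
/-!
The number of agents who err is `∑ i, 𝟙_{(A i)ᶜ}`, whose expectation is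
`∑ i, (1 - P (A i)) ≤ n ε̄ δ` by the hypothesis on the average of the `erf` values.
Markov's inequality at level `ε̄ n` then bounds the probability that a fraction `ε̄` errs by `δ`.
-/

open MeasureTheory Filter
open scoped Classical

open Finset

section

variable {ι Ω : Type*} [Fintype ι]

lemma card_filter_notMem_eq_sum_indicator (A : ι → Set Ω) (ω : Ω) :
    ((univ.filter fun i => ω ∉ A i).card : ℝ) = ∑ i, (A i)ᶜ.indicator 1 ω := by
  rw [natCast_card_filter]
  exact sum_congr rfl fun i _ => by by_cases h : ω ∈ A i <;> simp [h]

variable [MeasurableSpace Ω] (P : Measure Ω) [IsFiniteMeasure P] {A : ι → Set Ω}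

lemma integral_card_filter_notMem (hA : ∀ i, MeasurableSet (A i)) :
    ∫ ω, ((univ.filter fun i => ω ∉ A i).card : ℝ) ∂P = ∑ i, P.real (A i)ᶜ := by
  simp_rw [card_filter_notMem_eq_sum_indicator]
  rw [integral_finsetSum _ fun i _ => (integrable_const 1).indicator (hA i).compl]
  exact sum_congr rfl fun i _ => integral_indicator_one (hA i).compl

lemma measureReal_le_card_filter_notMem_le (hA : ∀ i, MeasurableSet (A i)) {c : ℝ} (hc : 0 < c) :
    P.real {ω | c ≤ ((univ.filter fun i => ω ∉ A i).card : ℝ)} ≤ (∑ i, P.real (A i)ᶜ) / c := by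
  have hint : Integrable (fun ω => ((univ.filter fun i => ω ∉ A i).card : ℝ)) P := by
    simp_rw [card_filter_notMem_eq_sum_indicator]
    exact integrable_finsetSum _ fun i _ => (integrable_const 1).indicator (hA i).compl
  rw [le_div_iff₀' hc, ← integral_card_filter_notMem P hA]
  exact mul_meas_ge_le_integral_of_nonneg (ae_of_all _ fun ω => by positivity) hint c

end

/-- Only an inequality, since `ENNReal.ofReal` clamps a negative `p` to `0`. -/
lemma measureReal_compl_le_of_eq_ofReal {Ω : Type*} [MeasurableSpace Ω] {P : Measure Ω}
    [IsProbabilityMeasure P] {s : Set Ω} (hs : MeasurableSet s) {p : ℝ}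
    (h : P s = ENNReal.ofReal p) : P.real sᶜ ≤ 1 - p := by
  rw [probReal_compl_eq_one_sub hs, measureReal_def, h, ENNReal.toReal_ofReal']
  linarith [le_max_left p 0]

theorem stmt_2_general (n : ℕ) (hn : 1 ≤ n) (ε εbar δ ρ ρbar : ℝ)
    (hεbar : εbar ∈ Set.Ioo (0:ℝ) 1)
    (k : Fin n → ℕ)
    {Ω : Type*} [MeasurableSpace Ω] (P : Measure Ω) [IsProbabilityMeasure P]
    (A : Fin n → Set Ω) (hmA : ∀ i, MeasurableSet (A i))
    (hPA : ∀ i, P (A i) = ENNReal.ofReal (erf (ε * Real.sqrt ((ρ + ρbar * k i) / 2))))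
    (hcond : 1 - εbar * δ ≤
        (1 / n : ℝ) * ∑ i, erf (ε * Real.sqrt ((ρ + ρbar * k i) / 2))) :
    P {ω | εbar ≤ (1 / n : ℝ) * ((Finset.univ.filter fun i => ω ∉ A i).card : ℝ)}
      ≤ ENNReal.ofReal δ := by
  have hn0 : (0 : ℝ) < n := by exact_mod_cast hn
  have hc : 0 < εbar * n := mul_pos hεbar.1 hn0
  have hfail : ∑ i, P.real (A i)ᶜ ≤ εbar * n * δ := by
    calc ∑ i, P.real (A i)ᶜ ≤ ∑ i, (1 - erf (ε * Real.sqrt ((ρ + ρbar * k i) / 2))) :=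
          sum_le_sum fun i _ => measureReal_compl_le_of_eq_ofReal (hmA i) (hPA i)
      _ = n - ∑ i, erf (ε * Real.sqrt ((ρ + ρbar * k i) / 2)) := by simp [sum_sub_distrib]
      _ ≤ εbar * n * δ := by
          rw [one_div, inv_mul_eq_div, le_div_iff₀' hn0] at hcond
          linarith
  have hset : {ω | εbar ≤ (1 / n : ℝ) * ((univ.filter fun i => ω ∉ A i).card : ℝ)} =
      {ω | εbar * n ≤ ((univ.filter fun i => ω ∉ A i).card : ℝ)} := by
    ext ω
    simp only [Set.mem_ofPred_eq, one_div, inv_mul_eq_div, le_div_iff₀ hn0]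
  rw [hset, ← ofReal_measureReal]
  refine ENNReal.ofReal_le_ofReal ?_
  calc _ ≤ (∑ i, P.real (A i)ᶜ) / (εbar * n) := measureReal_le_card_filter_notMem_le P hmA hc
    _ ≤ δ := by rwa [div_le_iff₀ hc, mul_comm δ]

/-- Proposition 1(b): sufficient condition for finite population learning.
If the average of `erf (ε √((ρ + ρ̄ kᵢ)/2))` is at least `1 - ε̄ δ`, then the
probability that at least a fraction `ε̄` of agents err is at most `δ`,
i.e. `(ε, ε̄, δ)`-learning occurs. -/
theorem stmt_2 (n : ℕ) (hn : 1 ≤ n) (ε εbar δ ρ ρbar : ℝ)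
    (hε : 0 < ε) (hεbar : εbar ∈ Set.Ioo (0:ℝ) 1) (hδ : δ ∈ Set.Ioo (0:ℝ) 1)
    (hρ : 0 < ρ) (hρbar : 0 < ρbar)
    (k : Fin n → ℕ) (hk : ∀ i, 1 ≤ k i)
    {Ω : Type*} [MeasurableSpace Ω] (P : Measure Ω) [IsProbabilityMeasure P]
    (A : Fin n → Set Ω) (hmA : ∀ i, MeasurableSet (A i))
    (hPA : ∀ i, P (A i) = ENNReal.ofReal (erf (ε * Real.sqrt ((ρ + ρbar * k i) / 2))))
    (hcond : 1 - εbar * δ ≤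
        (1 / n : ℝ) * ∑ i, erf (ε * Real.sqrt ((ρ + ρbar * k i) / 2))) :
    P {ω | εbar ≤ (1 / n : ℝ) * ((Finset.univ.filter fun i => ω ∉ A i).card : ℝ)}
      ≤ ENNReal.ofReal δ :=
  stmt_2_general n hn ε εbar δ ρ ρbar hεbar k P A hmA hPA hcond
end

section
/- (Corollary 1(b).) Under the learning setup, if erf(ε·√((ρ + ρ̄)/2)) ≥ 1 − ε̄·δ, then (ε, ε̄, δ)-learning occurs, i.e. P({ω : (1/n)·|{i : ω ∉ A_i}| ≥ ε̄}) ≤ δ, regardless of the values k_i ≥ 1. -/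
open MeasureTheory Filter
open scoped Classical

/-! Each agent fails with probability at most `ε̄ δ`, because `erf` is monotone and `kᵢ ≥ 1`.
The expected number of failing agents is then at most `n ε̄ δ`, so by Markov's inequality a
fraction `ε̄` of them fails with probability at most `δ`. -/

open scoped ENNReal

theorem erf_monotone : Monotone erf := by
  intro y x hyx
  have hint : ∀ a b : ℝ, IntervalIntegrable (fun t => Real.exp (-t ^ 2)) volume a b :=
    fun a b => (by fun_prop : Continuous fun t : ℝ => Real.exp (-t ^ 2)).intervalIntegrable a b
  unfold erf
  gcongr
  rw [← intervalIntegral.integral_add_adjacent_intervals (hint 0 y) (hint y x)]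
  have : 0 ≤ ∫ t in y..x, Real.exp (-t ^ 2) :=
    intervalIntegral.integral_nonneg hyx fun t _ => (Real.exp_pos _).le
  linarith

theorem prob_compl_le_ofReal {Ω : Type*} [MeasurableSpace Ω] {μ : Measure Ω}
    [IsProbabilityMeasure μ] {A : Set Ω} (hA : MeasurableSet A) {p x : ℝ}
    (hμA : μ A = ENNReal.ofReal p) (hpx : 1 - x ≤ p) : μ Aᶜ ≤ ENNReal.ofReal x := by
  rw [prob_compl_eq_one_sub hA, hμA, tsub_le_iff_right]
  calc (1 : ℝ≥0∞) ≤ ENNReal.ofReal (x + p) := by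
        rw [← ENNReal.ofReal_one]; exact ENNReal.ofReal_le_ofReal (by linarith)
    _ ≤ ENNReal.ofReal x + ENNReal.ofReal p := ENNReal.ofReal_add_le

theorem card_mem_eq_sum_indicator {Ω ι : Type*} [Fintype ι] (B : ι → Set Ω) (ω : Ω) :
    ((Finset.univ.filter fun i => ω ∈ B i).card : ℝ≥0∞) = ∑ i, (B i).indicator 1 ω := by
  simp only [Finset.card_filter, Nat.cast_sum, Set.indicator_apply, Pi.one_apply, Nat.cast_ite,
    Nat.cast_one, Nat.cast_zero]

section CountingEvents

variable {Ω ι : Type*} [MeasurableSpace Ω] [Fintype ι] (μ : Measure Ω) {B : ι → Set Ω}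

theorem lintegral_card_mem (hB : ∀ i, MeasurableSet (B i)) :
    ∫⁻ ω, ((Finset.univ.filter fun i => ω ∈ B i).card : ℝ≥0∞) ∂μ = ∑ i, μ (B i) := by
  simp only [card_mem_eq_sum_indicator]
  rw [lintegral_finsetSum _ fun i _ => measurable_one.indicator (hB i)]
  exact Finset.sum_congr rfl fun i _ => lintegral_indicator_one (hB i)

theorem mul_measure_le_card_mem_le_sum (hB : ∀ i, MeasurableSet (B i)) (c : ℝ≥0∞) :
    c * μ {ω | c ≤ (Finset.univ.filter fun i => ω ∈ B i).card} ≤ ∑ i, μ (B i) := by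
  have hmeas : Measurable fun ω => ((Finset.univ.filter fun i => ω ∈ B i).card : ℝ≥0∞) := by
    simp only [card_mem_eq_sum_indicator]
    exact Finset.measurable_sum _ fun i _ => measurable_one.indicator (hB i)
  rw [← lintegral_card_mem μ hB]
  exact mul_meas_ge_le_lintegral₀ hmeas.aemeasurable c

theorem measure_fraction_mem_le [Nonempty ι] (hB : ∀ i, MeasurableSet (B i)) {εbar δ : ℝ}
    (hεbar : 0 < εbar) (hBδ : ∀ i, μ (B i) ≤ ENNReal.ofReal (εbar * δ)) :
    μ {ω | εbar ≤ (1 / Fintype.card ι : ℝ) * (Finset.univ.filter fun i => ω ∈ B i).card}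
      ≤ ENNReal.ofReal δ := by
  set n : ℕ := Fintype.card ι
  have hn : (0 : ℝ) < n := Nat.cast_pos.mpr Fintype.card_pos
  set c : ℝ≥0∞ := ENNReal.ofReal (εbar * n)
  have hsub : {ω | εbar ≤ (1 / n : ℝ) * (Finset.univ.filter fun i => ω ∈ B i).card}
      ⊆ {ω | c ≤ (Finset.univ.filter fun i => ω ∈ B i).card} := by
    intro ω hω
    rw [Set.mem_ofPred_eq, one_div, inv_mul_eq_div, le_div_iff₀ hn] at hω
    simpa [c, ← ENNReal.ofReal_natCast] using ENNReal.ofReal_le_ofReal hω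
  have hmarkov : c * μ {ω | c ≤ (Finset.univ.filter fun i => ω ∈ B i).card} ≤ c * ENNReal.ofReal δ :=
    calc _ ≤ ∑ i, μ (B i) := mul_measure_le_card_mem_le_sum μ hB c
      _ ≤ ∑ _i : ι, ENNReal.ofReal (εbar * δ) := Finset.sum_le_sum fun i _ => hBδ i
      _ = c * ENNReal.ofReal δ := by
        rw [Finset.sum_const, Finset.card_univ, nsmul_eq_mul, ← ENNReal.ofReal_natCast,
          ← ENNReal.ofReal_mul hn.le, ← ENNReal.ofReal_mul (by positivity), mul_left_comm,
          mul_assoc]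
  have hc : c ≠ 0 := by positivity
  exact (measure_mono hsub).trans
    ((ENNReal.mul_le_mul_iff_right hc ENNReal.ofReal_ne_top).mp hmarkov)

end CountingEvents

theorem stmt_4_general (n : ℕ) (hn : 1 ≤ n) (ε εbar δ ρ ρbar : ℝ)
    (hε : 0 < ε) (hεbar : εbar ∈ Set.Ioo (0:ℝ) 1)
    (hρbar : 0 < ρbar)
    (k : Fin n → ℕ) (hk : ∀ i, 1 ≤ k i)
    {Ω : Type*} [MeasurableSpace Ω] (P : Measure Ω) [IsProbabilityMeasure P]
    (A : Fin n → Set Ω) (hmA : ∀ i, MeasurableSet (A i))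
    (hPA : ∀ i, P (A i) = ENNReal.ofReal (erf (ε * Real.sqrt ((ρ + ρbar * k i) / 2))))
    (hcond : 1 - εbar * δ ≤ erf (ε * Real.sqrt ((ρ + ρbar) / 2))) :
    P {ω | εbar ≤ (1 / n : ℝ) * ((Finset.univ.filter fun i => ω ∉ A i).card : ℝ)}
      ≤ ENNReal.ofReal δ := by
  have : Nonempty (Fin n) := ⟨⟨0, hn⟩⟩
  have hfail : ∀ i, P (A i)ᶜ ≤ ENNReal.ofReal (εbar * δ) := fun i =>
    prob_compl_le_ofReal (hmA i) (hPA i) <| hcond.trans <| erf_monotone <| by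
      have : (1 : ℝ) ≤ k i := by exact_mod_cast hk i
      gcongr
      nlinarith
  simpa only [Fintype.card_fin, Set.mem_compl_iff] using
    measure_fraction_mem_le P (fun i => (hmA i).compl) hεbar.1 hfail

/-- Corollary 1(b): if `erf (ε √((ρ + ρ̄)/2)) ≥ 1 - ε̄ δ`, then
`(ε, ε̄, δ)`-learning occurs regardless of the values `kᵢ ≥ 1`. -/
theorem stmt_4 (n : ℕ) (hn : 1 ≤ n) (ε εbar δ ρ ρbar : ℝ)
    (hε : 0 < ε) (hεbar : εbar ∈ Set.Ioo (0:ℝ) 1) (hδ : δ ∈ Set.Ioo (0:ℝ) 1)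
    (hρ : 0 < ρ) (hρbar : 0 < ρbar)
    (k : Fin n → ℕ) (hk : ∀ i, 1 ≤ k i)
    {Ω : Type*} [MeasurableSpace Ω] (P : Measure Ω) [IsProbabilityMeasure P]
    (A : Fin n → Set Ω) (hmA : ∀ i, MeasurableSet (A i))
    (hPA : ∀ i, P (A i) = ENNReal.ofReal (erf (ε * Real.sqrt ((ρ + ρbar * k i) / 2))))
    (hcond : 1 - εbar * δ ≤ erf (ε * Real.sqrt ((ρ + ρbar) / 2))) :
    P {ω | εbar ≤ (1 / n : ℝ) * ((Finset.univ.filter fun i => ω ∉ A i).card : ℝ)}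
      ≤ ENNReal.ofReal δ :=
  stmt_4_general n hn ε εbar δ ρ ρbar hε hεbar hρbar k hk P A hmA hPA hcond
end

section
/- (Corollary 2(b), multiple equilibria, sufficient condition.) Under the multi-equilibrium learning setup, if min over σ ∈ S of (1/n)·∑_{i=1}^n erf(ε·√((ρ + ρ̄·k_i^σ)/2)) is ≥ 1 − ε̄·δ, then learning under all equilibria occurs: sup over σ ∈ S of P_σ({ω : (1/n)·|{i : ω ∉ A_i^σ}| ≥ ε̄}) ≤ δ. -/
/-!
Markov's inequality applied to the number of agents whose estimate is wrong: its expectation is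
`∑ᵢ (1 - P(Aᵢ)) ≤ n ε̄ δ` by the hypothesis on the average precision, so the probability that it
reaches `ε̄ n` is at most `δ`.
-/

open MeasureTheory Filter
open scoped Classical

open Finset

lemma card_notMem_eq_sum_indicator_compl {Ω ι : Type*} [Fintype ι] (A : ι → Set Ω) (ω : Ω) :
    (#{i | ω ∉ A i} : ℝ) = ∑ i, (A i)ᶜ.indicator 1 ω := by
  simp [Finset.card_filter, Set.indicator_apply]

section FailureCount

variable {Ω ι : Type*} [MeasurableSpace Ω] [Fintype ι] {μ : Measure Ω} {A : ι → Set Ω}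

lemma mul_measureReal_card_notMem_ge_le_sum [IsFiniteMeasure μ] (hA : ∀ i, MeasurableSet (A i))
    (c : ℝ) : c * μ.real {ω | c ≤ #{i | ω ∉ A i}} ≤ ∑ i, μ.real (A i)ᶜ := by
  have hint : ∀ i, Integrable ((A i)ᶜ.indicator (1 : Ω → ℝ)) μ := fun i =>
    (integrable_const 1).indicator (hA i).compl
  simp_rw [card_notMem_eq_sum_indicator_compl A]
  calc c * μ.real {ω | c ≤ ∑ i, (A i)ᶜ.indicator 1 ω}
      ≤ ∫ ω, ∑ i, (A i)ᶜ.indicator 1 ω ∂μ :=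
        mul_meas_ge_le_integral_of_nonneg
          (ae_of_all _ fun ω => sum_nonneg fun i _ => Set.indicator_nonneg (by simp) ω)
          (integrable_finsetSum _ fun i _ => hint i) c
    _ = ∑ i, μ.real (A i)ᶜ := by
      rw [integral_finsetSum _ fun i _ => hint i]
      exact sum_congr rfl fun i _ => integral_indicator_one (hA i).compl

theorem measure_avg_card_notMem_ge_le [IsProbabilityMeasure μ] [Nonempty ι]
    (hA : ∀ i, MeasurableSet (A i)) {p : ι → ℝ} (hp : ∀ i, p i ≤ μ.real (A i)) {εbar δ : ℝ}
    (hεbar : 0 < εbar)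
    (hmean : 1 - εbar * δ ≤ (1 / Fintype.card ι : ℝ) * ∑ i, p i) :
    μ {ω | εbar ≤ (1 / Fintype.card ι : ℝ) * #{i | ω ∉ A i}} ≤ ENNReal.ofReal δ := by
  set N : ℝ := (Fintype.card ι : ℝ)
  have hN : 0 < N := by positivity
  have hevent : {ω | εbar ≤ (1 / N) * #{i | ω ∉ A i}} = {ω | εbar * N ≤ #{i | ω ∉ A i}} := by
    ext ω
    simp only [Set.mem_ofPred_eq, one_div_mul_eq_div, le_div_iff₀ hN]
  have hexpect : ∑ i, μ.real (A i)ᶜ ≤ εbar * N * δ := by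
    have hsum : N * (1 - εbar * δ) ≤ ∑ i, p i := by
      rwa [← le_div_iff₀' hN, ← one_div_mul_eq_div]
    calc ∑ i, μ.real (A i)ᶜ = ∑ i, (1 - μ.real (A i)) :=
          sum_congr rfl fun i _ => probReal_compl_eq_one_sub (hA i)
      _ ≤ ∑ i, (1 - p i) := sum_le_sum fun i _ => sub_le_sub_left (hp i) 1
      _ = N - ∑ i, p i := by simp [N]
      _ ≤ εbar * N * δ := by linarith
  rw [hevent, ← ofReal_measureReal]
  refine ENNReal.ofReal_le_ofReal (le_of_mul_le_mul_left ?_ (by positivity : 0 < εbar * N))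
  exact (mul_measureReal_card_notMem_ge_le_sum hA (εbar * N)).trans hexpect

end FailureCount

theorem stmt_6_general (n : ℕ) (hn : 1 ≤ n) (ε εbar δ ρ ρbar : ℝ)
    (hεbar : εbar ∈ Set.Ioo (0:ℝ) 1)
    (S : Type*) [Fintype S] [Nonempty S]
    (k : S → Fin n → ℕ)
    (Ω : S → Type*) [∀ σ, MeasurableSpace (Ω σ)]
    (P : ∀ σ, Measure (Ω σ)) [∀ σ, IsProbabilityMeasure (P σ)]
    (A : (σ : S) → Fin n → Set (Ω σ)) (hmA : ∀ σ i, MeasurableSet (A σ i))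
    (hPA : ∀ σ i, P σ (A σ i)
        = ENNReal.ofReal (erf (ε * Real.sqrt ((ρ + ρbar * k σ i) / 2))))
    (hcond : 1 - εbar * δ ≤ Finset.univ.inf' Finset.univ_nonempty
        (fun σ : S => (1 / n : ℝ) * ∑ i, erf (ε * Real.sqrt ((ρ + ρbar * k σ i) / 2)))) :
    (⨆ σ : S, P σ {ω | εbar ≤
        (1 / n : ℝ) * ((Finset.univ.filter fun i => ω ∉ A σ i).card : ℝ)})
      ≤ ENNReal.ofReal δ := by
  have : NeZero n := ⟨by omega⟩
  refine iSup_le fun σ => ?_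
  have hp : ∀ i, erf (ε * Real.sqrt ((ρ + ρbar * k σ i) / 2)) ≤ (P σ).real (A σ i) := fun i => by
    rw [measureReal_def, hPA, ENNReal.toReal_ofReal']
    exact le_max_left _ _
  simpa using measure_avg_card_notMem_ge_le (hmA σ) hp hεbar.1
    (by simpa using hcond.trans (inf'_le _ (mem_univ σ)))

/-- Corollary 2(b): multiple equilibria, sufficient condition. If the minimum
over equilibria `σ ∈ S` of the average `erf` value is at least `1 - ε̄ δ`,
then learning under all equilibria occurs: the sup over `σ` of the probability
that at least a fraction `ε̄` of agents err is at most `δ`. -/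
theorem stmt_6 (n : ℕ) (hn : 1 ≤ n) (ε εbar δ ρ ρbar : ℝ)
    (hε : 0 < ε) (hεbar : εbar ∈ Set.Ioo (0:ℝ) 1) (hδ : δ ∈ Set.Ioo (0:ℝ) 1)
    (hρ : 0 < ρ) (hρbar : 0 < ρbar)
    (S : Type*) [Fintype S] [Nonempty S]
    (k : S → Fin n → ℕ) (hk : ∀ σ i, 1 ≤ k σ i)
    (Ω : S → Type*) [∀ σ, MeasurableSpace (Ω σ)]
    (P : ∀ σ, Measure (Ω σ)) [∀ σ, IsProbabilityMeasure (P σ)]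
    (A : (σ : S) → Fin n → Set (Ω σ)) (hmA : ∀ σ i, MeasurableSet (A σ i))
    (hPA : ∀ σ i, P σ (A σ i)
        = ENNReal.ofReal (erf (ε * Real.sqrt ((ρ + ρbar * k σ i) / 2))))
    (hcond : 1 - εbar * δ ≤ Finset.univ.inf' Finset.univ_nonempty
        (fun σ : S => (1 / n : ℝ) * ∑ i, erf (ε * Real.sqrt ((ρ + ρbar * k σ i) / 2)))) :
    (⨆ σ : S, P σ {ω | εbar ≤
        (1 / n : ℝ) * ((Finset.univ.filter fun i => ω ∉ A σ i).card : ℝ)})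
      ≤ ENNReal.ofReal δ :=
  stmt_6_general n hn ε εbar δ ρ ρbar hεbar S k Ω P A hmA hPA hcond
end

section
/- (Lemma 1, existence of pure-strategy Nash equilibrium in finite supermodular games.) Let N ≥ 1 players be indexed by i ∈ {1,…,N}, each with strategy set S_i = {0,1,…,m_i} (m_i ∈ ℕ) ordered as natural numbers, and payoff functions u_i : S_1 × ⋯ × S_N → ℝ satisfying increasing differences: for every player i, all profiles a, b with a_j ≤ b_j for all j, and all s, t ∈ S_i with s ≤ t, one has u_i(b with i-th coordinate t) − u_i(b with i-th coordinate s) ≥ u_i(a with i-th coordinate t) − u_i(a with i-th coordinate s). Then there exists a pure-strategy Nash equilibrium, i.e., a profile l such that for every player i and every s ∈ S_i, u_i(l with i-th coordinate s) ≤ u_i(l). -/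
/-!
For each profile `x`, let `T x` be the profile of greatest best responses to `x`. Increasing
differences make `T` monotone (Topkis): if `x ≤ y` and the best reply to `y` were below the best
reply to `x`, exchanging the two would not lower player `i`'s payoff against `y`, contradicting
maximality. The profiles form a complete lattice, so Tarski's theorem gives a fixed point of `T`,
and a fixed point of a best-response map is a Nash equilibrium.
-/

open Function

namespace SupermodularGame

variable {ι : Type*} [DecidableEq ι] {S : ι → Type*}

def IsNashEquilibrium (u : ι → (∀ j, S j) → ℝ) (l : ∀ j, S j) : Prop :=
  ∀ i, ∀ s : S i, u i (update l i s) ≤ u i l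

def HasIncreasingDifferences [∀ i, Preorder (S i)] (u : ι → (∀ j, S j) → ℝ) : Prop :=
  ∀ i, ∀ a b : ∀ j, S j, a ≤ b → ∀ s t : S i, s ≤ t →
    u i (update a i t) - u i (update a i s) ≤ u i (update b i t) - u i (update b i s)

section BestResponse

variable [∀ i, Fintype (S i)] (u : ι → (∀ j, S j) → ℝ)

open Classical in
noncomputable def bestResponses (x : ∀ j, S j) (i : ι) : Finset (S i) :=
  {s | ∀ s', u i (update x i s') ≤ u i (update x i s)}

theorem mem_bestResponses {x : ∀ j, S j} {i : ι} {s : S i} :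
    s ∈ bestResponses u x i ↔ ∀ s', u i (update x i s') ≤ u i (update x i s) := by
  simp [bestResponses]

variable [∀ i, Nonempty (S i)]

theorem bestResponses_nonempty (x : ∀ j, S j) (i : ι) : (bestResponses u x i).Nonempty := by
  obtain ⟨s, -, hs⟩ := Finset.univ.exists_max_image (fun s => u i (update x i s))
    Finset.univ_nonempty
  exact ⟨s, (mem_bestResponses u).2 fun s' => hs s' (Finset.mem_univ _)⟩

variable [∀ i, LinearOrder (S i)]

noncomputable def greatestBestResponse (x : ∀ j, S j) : ∀ i, S i :=
  fun i => (bestResponses u x i).max' (bestResponses_nonempty u x i)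

theorem le_greatestBestResponse_apply (x : ∀ j, S j) (i : ι) (s : S i) :
    u i (update x i s) ≤ u i (update x i (greatestBestResponse u x i)) :=
  (mem_bestResponses u).1 (Finset.max'_mem _ _) s

theorem le_greatestBestResponse {x : ∀ j, S j} {i : ι} {s : S i}
    (hs : s ∈ bestResponses u x i) : s ≤ greatestBestResponse u x i :=
  Finset.le_max' _ _ hs

theorem monotone_greatestBestResponse (hu : HasIncreasingDifferences u) :
    Monotone (greatestBestResponse u) := by
  intro x y hxy i
  by_contra! hlt
  set t := greatestBestResponse u x i
  set s := greatestBestResponse u y i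
  have hx : u i (update x i s) ≤ u i (update x i t) := le_greatestBestResponse_apply u x i s
  have hdiff := hu i x y hxy s t hlt.le
  have hy : u i (update y i s) ≤ u i (update y i t) := by linarith
  have ht : t ∈ bestResponses u y i :=
    (mem_bestResponses u).2 fun s' => (le_greatestBestResponse_apply u y i s').trans hy
  exact (le_greatestBestResponse u ht).not_gt hlt

theorem isNashEquilibrium_of_isFixedPt {l : ∀ j, S j}
    (hl : IsFixedPt (greatestBestResponse u) l) : IsNashEquilibrium u l := by
  intro i s
  simpa [congrFun hl i] using le_greatestBestResponse_apply u l i s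

end BestResponse

theorem exists_isNashEquilibrium [∀ i, Fintype (S i)] [∀ i, CompleteLinearOrder (S i)]
    (u : ι → (∀ j, S j) → ℝ) (hu : HasIncreasingDifferences u) :
    ∃ l, IsNashEquilibrium u l :=
  let T : (∀ j, S j) →o ∀ j, S j := ⟨greatestBestResponse u, monotone_greatestBestResponse u hu⟩
  ⟨T.lfp, isNashEquilibrium_of_isFixedPt u T.isFixedPt_lfp⟩

end SupermodularGame

theorem stmt_7_general (N : ℕ) (m : Fin N → ℕ)
    (u : Fin N → (∀ j, Fin (m j + 1)) → ℝ)
    (hsupermod : ∀ i : Fin N, ∀ a b : ∀ j, Fin (m j + 1), (∀ j, a j ≤ b j) →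
      ∀ s t : Fin (m i + 1), s ≤ t →
        u i (Function.update a i t) - u i (Function.update a i s) ≤
          u i (Function.update b i t) - u i (Function.update b i s)) :
    ∃ l : ∀ j, Fin (m j + 1), ∀ i : Fin N, ∀ s : Fin (m i + 1),
      u i (Function.update l i s) ≤ u i l :=
  SupermodularGame.exists_isNashEquilibrium u hsupermod

/-- Lemma 1: a finite game with linearly ordered strategy sets
`S_i = {0, 1, …, m_i}` and payoffs satisfying increasing differences
(a supermodular game) has a pure-strategy Nash equilibrium. -/
theorem stmt_7 (N : ℕ) (hN : 1 ≤ N) (m : Fin N → ℕ)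
    (u : Fin N → (∀ j, Fin (m j + 1)) → ℝ)
    (hsupermod : ∀ i : Fin N, ∀ a b : ∀ j, Fin (m j + 1), (∀ j, a j ≤ b j) →
      ∀ s t : Fin (m i + 1), s ≤ t →
        u i (Function.update a i t) - u i (Function.update a i s) ≤
          u i (Function.update b i t) - u i (Function.update b i s)) :
    ∃ l : ∀ j, Fin (m j + 1), ∀ i : Fin N, ∀ s : Fin (m i + 1),
      u i (Function.update l i s) ≤ u i l :=
  stmt_7_general N m u hsupermod
end

section
/- (Proposition 3, learning rate under a uniform lower bound on signals.) Let ε > 0, ε̄ ∈ (0,1), ρ > 0, ρ̄ > 0. Let f : ℕ → ℝ with f(n) ≥ 1 for all n and f(n) → ∞ as n → ∞, and for each n let k_1^n, …, k_n^n be natural numbers with k_i^n ≥ f(n) for every i ∈ {1,…,n}. Define δ_n = (1/(√π·ε̄))·(1/(ε·√(ρ + ρ̄·f(n))))·exp(−ε²·(ρ + ρ̄·f(n))/4). Then δ_n → 0 as n → ∞, and for every n, (1/n)·∑_{i=1}^n erf(ε·√((ρ + ρ̄·k_i^n)/2)) ≥ 1 − δ_n·ε̄; that is, the sufficient condition for (ε,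 ε̄, δ_n)-learning holds for every n, so δ-perfect learning occurs at a rate of order exp(−ρ̄·ε²·f(n)/4) up to a polynomial factor. -/
open Filter

/-!
For `x > 0`, `1 - erf x ≤ φ(x)/x` with `φ(x) = e^{-x²/2}/√(2π)`: the function `φ(x)/x + erf x`
tends to `1` at infinity and is decreasing on `(0, ∞)`, because its derivative
`2/√π e^{-x²} - e^{-x²/2}(x² + 1)/(√(2π) x²)` is nonpositive, i.e. `2√2 x² e^{-x²/2} ≤ x² + 1`.
At `x = ε √((ρ + ρ̄ m)/2)` the bound `φ(x)/x` equals `δ_n ε̄` for `m = f n`, and it decreases in `m`,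
so every agent, having `k_i^n ≥ f n` signals, has `erf ≥ 1 - δ_n ε̄`; averaging gives the claim.
Since `f n → ∞`, the argument `x` tends to infinity and `δ_n → 0`.
-/

open Real Topology MeasureTheory

lemma hasDerivAt_erf (x : ℝ) : HasDerivAt erf (2 / √π * exp (-x ^ 2)) x := by
  have hc : Continuous fun t : ℝ => exp (-t ^ 2) := by fun_prop
  exact (hc.integral_hasStrictDerivAt 0 x).hasDerivAt.const_mul _

lemma tendsto_erf_atTop : Tendsto erf atTop (𝓝 1) := by
  have hint : IntegrableOn (fun t : ℝ => exp (-t ^ 2)) (Set.Ioi 0) := by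
    simpa using (integrable_exp_neg_mul_sq one_pos).integrableOn (s := Set.Ioi (0:ℝ))
  have hval : ∫ t in Set.Ioi (0:ℝ), exp (-t ^ 2) = √π / 2 := by
    simpa using integral_gaussian_Ioi 1
  have hlim := (intervalIntegral_tendsto_integral_Ioi 0 hint tendsto_id).const_mul (2 / √π)
  rwa [hval, show 2 / √π * (√π / 2) = 1 by field_simp] at hlim

-- `φ(x) / x` with `φ` the standard normal density: the Mills-ratio bound on the normal tail.
noncomputable def gaussianTailBound (x : ℝ) : ℝ := exp (-x ^ 2 / 2) / (√(2 * π) * x)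

lemma tendsto_gaussianTailBound_atTop : Tendsto gaussianTailBound atTop (𝓝 0) := by
  have hexp : Tendsto (fun x : ℝ => exp (-x ^ 2 / 2)) atTop (𝓝 0) := by
    refine tendsto_exp_atBot.comp ?_
    simpa only [Function.comp_def, neg_div] using
      tendsto_neg_atTop_atBot.comp ((tendsto_pow_atTop two_ne_zero).atTop_div_const two_pos)
  exact hexp.div_atTop (tendsto_id.const_mul_atTop (by positivity))

lemma hasDerivAt_gaussianTailBound {x : ℝ} (hx : x ≠ 0) :
    HasDerivAt gaussianTailBound
      (-(exp (-x ^ 2 / 2) * (x ^ 2 + 1) / (√(2 * π) * x ^ 2))) x := by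
  have hs : √(2 * π) ≠ 0 := by positivity
  have hnum : HasDerivAt (fun y : ℝ => exp (-y ^ 2 / 2)) (exp (-x ^ 2 / 2) * (-x)) x := by
    have h : HasDerivAt (fun y : ℝ => -y ^ 2 / 2) (-((2 : ℕ) * x ^ (2 - 1)) / 2) x :=
      (hasDerivAt_pow 2 x).neg.div_const 2
    exact h.exp.congr_deriv (by norm_num; ring)
  have hden : HasDerivAt (fun y : ℝ => √(2 * π) * y) (√(2 * π)) x := by
    simpa using (hasDerivAt_id x).const_mul (√(2 * π))
  refine (hnum.div hden (mul_ne_zero hs hx)).congr_deriv ?_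
  field_simp
  ring

lemma gaussianTailBound_antitoneOn : AntitoneOn gaussianTailBound (Set.Ioi 0) := by
  intro a (ha : 0 < a) b _ hab
  unfold gaussianTailBound
  gcongr

lemma sq_mul_exp_neg_sq_div_two_le (y : ℝ) :
    2 * √2 * y ^ 2 * exp (-y ^ 2 / 2) ≤ y ^ 2 + 1 := by
  set t := y ^ 2
  have ht : 0 ≤ t := sq_nonneg y
  have hexp : 1 + t / 2 ≤ exp (t / 2) := by linarith [add_one_le_exp (t / 2)]
  -- `√2 ≥ 11/8` makes the discriminant of `t² + (3 - 4√2) t + 2` nonpositive.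
  have hsqrt : 11 / 8 ≤ √2 := le_sqrt_of_sq_le (by norm_num)
  have hquad : 4 * √2 * t ≤ (1 + t) * (2 + t) := by
    nlinarith [sq_nonneg (t - 2 * √2 + 3 / 2), sq_sqrt (zero_le_two : (0:ℝ) ≤ 2)]
  rw [show -t / 2 = -(t / 2) by ring, exp_neg, ← div_eq_mul_inv, div_le_iff₀ (exp_pos _)]
  nlinarith [mul_le_mul_of_nonneg_left hexp (by positivity : (0:ℝ) ≤ 1 + t)]

lemma deriv_erf_le_neg_deriv_gaussianTailBound {x : ℝ} (hx : x ≠ 0) :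
    2 / √π * exp (-x ^ 2) ≤ exp (-x ^ 2 / 2) * (x ^ 2 + 1) / (√(2 * π) * x ^ 2) := by
  have hx2 : 0 < x ^ 2 := by positivity
  rw [le_div_iff₀ (by positivity), sqrt_mul zero_le_two,
    show exp (-x ^ 2) = exp (-x ^ 2 / 2) * exp (-x ^ 2 / 2) by rw [← exp_add]; ring_nf]
  have key :=
    mul_le_mul_of_nonneg_right (sq_mul_exp_neg_sq_div_two_le x) (exp_pos (-x ^ 2 / 2)).le
  calc 2 / √π * (exp (-x ^ 2 / 2) * exp (-x ^ 2 / 2)) * (√2 * √π * x ^ 2)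
      = 2 * √2 * x ^ 2 * exp (-x ^ 2 / 2) * exp (-x ^ 2 / 2) := by field_simp
    _ ≤ exp (-x ^ 2 / 2) * (x ^ 2 + 1) := by linarith

lemma one_sub_erf_le_gaussianTailBound {x : ℝ} (hx : 0 < x) :
    1 - erf x ≤ gaussianTailBound x := by
  set g : ℝ → ℝ := fun y => gaussianTailBound y + erf y
  have hderiv : ∀ y ∈ Set.Ioi (0:ℝ), HasDerivAt g
      (-(exp (-y ^ 2 / 2) * (y ^ 2 + 1) / (√(2 * π) * y ^ 2)) + 2 / √π * exp (-y ^ 2)) y :=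
    fun y hy => (hasDerivAt_gaussianTailBound (ne_of_gt hy)).add (hasDerivAt_erf y)
  have hanti : AntitoneOn g (Set.Ioi 0) := by
    refine antitoneOn_of_hasDerivWithinAt_nonpos (convex_Ioi 0)
      (fun y hy => (hderiv y hy).continuousAt.continuousWithinAt)
      (fun y hy => (hderiv y (interior_subset hy)).hasDerivWithinAt) fun y hy => ?_
    linarith [deriv_erf_le_neg_deriv_gaussianTailBound (ne_of_gt (interior_subset hy : 0 < y))]
  have hlim : Tendsto g atTop (𝓝 1) := by
    simpa using tendsto_gaussianTailBound_atTop.add tendsto_erf_atTop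
  have : 1 ≤ g x := le_of_tendsto hlim <| (eventually_ge_atTop x).mono fun y hy =>
    hanti hx (hx.trans_le hy) hy
  linarith

lemma gaussianTailBound_mul_sqrt_half {ε v : ℝ} (hε : 0 < ε) (hv : 0 < v) :
    gaussianTailBound (ε * √(v / 2)) = 1 / √π * (1 / (ε * √v)) * exp (-(ε ^ 2 * v) / 4) := by
  have hsq : (ε * √(v / 2)) ^ 2 = ε ^ 2 * v / 2 := by
    rw [mul_pow, sq_sqrt (by positivity)]; ring
  have hden : √(2 * π) * (ε * √(v / 2)) = √π * (ε * √v) := by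
    rw [sqrt_mul zero_le_two, sqrt_div hv.le]
    field_simp
  rw [gaussianTailBound, hsq, hden, show -(ε ^ 2 * v / 2) / 2 = -(ε ^ 2 * v) / 4 by ring]
  field_simp

/-- Proposition 3: learning rate under a uniform lower bound on signals.
If every agent in the size-`n` network obtains at least `f n` signals with
`f n → ∞`, then with `δ_n = (1/(√π ε̄)) (1/(ε √(ρ + ρ̄ f n))) e^{-ε²(ρ + ρ̄ f n)/4}`
we have `δ_n → 0` and the sufficient condition for `(ε, ε̄, δ_n)`-learning,
`(1/n) ∑ᵢ erf(ε√((ρ + ρ̄ kᵢⁿ)/2)) ≥ 1 - δ_n ε̄`, holds for every `n ≥ 1`. -/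
theorem stmt_11 (ε εbar ρ ρbar : ℝ) (hε : 0 < ε) (hεbar : εbar ∈ Set.Ioo (0:ℝ) 1)
    (hρ : 0 < ρ) (hρbar : 0 < ρbar)
    (f : ℕ → ℝ) (hf1 : ∀ n, 1 ≤ f n) (hftop : Tendsto f atTop atTop)
    (k : (n : ℕ) → Fin n → ℕ) (hk : ∀ n, ∀ i : Fin n, f n ≤ (k n i : ℝ))
    (δ : ℕ → ℝ)
    (hδ : ∀ n, δ n = (1 / (Real.sqrt Real.pi * εbar))
        * (1 / (ε * Real.sqrt (ρ + ρbar * f n)))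
        * Real.exp (-(ε ^ 2 * (ρ + ρbar * f n)) / 4)) :
    Tendsto δ atTop (nhds 0) ∧
      ∀ n : ℕ, 1 ≤ n →
        1 - δ n * εbar ≤
          (1 / n : ℝ) * ∑ i : Fin n, erf (ε * Real.sqrt ((ρ + ρbar * k n i) / 2)) := by
  obtain ⟨hεbar, -⟩ := hεbar
  set x : ℝ → ℝ := fun m => ε * √((ρ + ρbar * m) / 2) with hx
  have hv : ∀ n, 0 < ρ + ρbar * f n := fun n => by nlinarith [hf1 n]
  have hx_pos : ∀ n, 0 < x (f n) := fun n => mul_pos hε (sqrt_pos.2 (half_pos (hv n)))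
  have hδ_eq : ∀ n, δ n = gaussianTailBound (x (f n)) / εbar := fun n => by
    rw [hδ n, gaussianTailBound_mul_sqrt_half hε (hv n)]
    field_simp
  refine ⟨?_, fun n hn => ?_⟩
  · have hv_top : Tendsto (fun n => (ρ + ρbar * f n) / 2) atTop atTop :=
      (tendsto_atTop_add_const_left _ ρ (hftop.const_mul_atTop hρbar)).atTop_div_const two_pos
    have hx_top : Tendsto (fun n => x (f n)) atTop atTop :=
      (tendsto_sqrt_atTop.comp hv_top).const_mul_atTop hε
    rw [funext hδ_eq, ← zero_div εbar]
    exact (tendsto_gaussianTailBound_atTop.comp hx_top).div_const εbar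
  · have hterm : ∀ i : Fin n, 1 - δ n * εbar ≤ erf (x (k n i)) := fun i => by
      have hxi : x (f n) ≤ x (k n i) := by simp only [hx]; gcongr; exact hk n i
      have := one_sub_erf_le_gaussianTailBound ((hx_pos n).trans_le hxi)
      have := gaussianTailBound_antitoneOn (hx_pos n) ((hx_pos n).trans_le hxi) hxi
      rw [hδ_eq, div_mul_cancel₀ _ hεbar.ne']
      linarith
    have hmean := Finset.le_expect ⟨⟨0, hn⟩, Finset.mem_univ _⟩ fun i _ => hterm i
    rwa [Fintype.expect_eq_sum_div_card, Fintype.card_fin, div_eq_inv_mul, ← one_div] at hmean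
end

section
/- (Monotonicity of h in the binomial tree learning-rate computation.) Let ρ > 0, ρ̄ > 0, and ε > 0 satisfy ε² < −(4/ρ̄)·ln((1/2)·√((ρ + 2ρ̄)/(ρ + ρ̄))). Then the function h(x) = 2^{x−1}·(ρ + ρ̄·x)^{−1/2}·exp(−ε²·(ρ + ρ̄·x)/4) satisfies h(x+1) > h(x) for every real x ≥ 1; i.e., h is strictly increasing along integer steps on [1, ∞). -/
/-!
Writing `A = ρ + ρ̄ x`, one step multiplies `h` by `2 e^{-ε²ρ̄/4} / √((A + ρ̄)/A)`.
The ratio `(A + ρ̄)/A` decreases in `A`, so for `x ≥ 1` it is at most its value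
`(ρ + 2ρ̄)/(ρ + ρ̄)` at `x = 1`, and the hypothesis on `ε` is exactly the statement
that `√((ρ + 2ρ̄)/(ρ + ρ̄)) < 2 e^{-ε²ρ̄/4}`.
-/

open Real

noncomputable def learningRateSummand (ρ ρbar ε x : ℝ) : ℝ :=
  (2:ℝ) ^ (x - 1) / √(ρ + ρbar * x) * exp (-(ε ^ 2 * (ρ + ρbar * x)) / 4)

section

variable {ρ ρbar ε x : ℝ}

theorem learningRateSummand_pos (hA : 0 < ρ + ρbar * x) :
    0 < learningRateSummand ρ ρbar ε x := by
  unfold learningRateSummand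
  have : 0 < √(ρ + ρbar * x) := sqrt_pos.mpr hA
  positivity

theorem learningRateSummand_succ_div (hA : 0 < ρ + ρbar * x) :
    learningRateSummand ρ ρbar ε (x + 1) / learningRateSummand ρ ρbar ε x =
      2 * exp (-(ε ^ 2 * ρbar) / 4) / √((ρ + ρbar * (x + 1)) / (ρ + ρbar * x)) := by
  have hsA : 0 < √(ρ + ρbar * x) := sqrt_pos.mpr hA
  have hpow : (2:ℝ) ^ (x + 1 - 1) = (2:ℝ) ^ (x - 1) * 2 := by
    rw [show x + 1 - 1 = (x - 1) + 1 by ring, rpow_add two_pos, rpow_one]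
  have hexp : exp (-(ε ^ 2 * (ρ + ρbar * (x + 1))) / 4) =
      exp (-(ε ^ 2 * (ρ + ρbar * x)) / 4) * exp (-(ε ^ 2 * ρbar) / 4) := by
    rw [← exp_add]; ring_nf
  unfold learningRateSummand
  rw [hpow, hexp, sqrt_div' _ hA.le]
  have : 0 < (2:ℝ) ^ (x - 1) := rpow_pos_of_pos two_pos _
  field_simp

end

theorem add_div_le_add_div_of_le {a A b : ℝ} (ha : 0 < a) (haA : a ≤ A) (hb : 0 ≤ b) :
    (A + b) / A ≤ (a + b) / a := by
  rw [add_div, add_div, div_self (ha.trans_le haA).ne', div_self ha.ne']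
  gcongr

theorem lt_exp_of_lt_neg_div_mul_log {k c t y : ℝ} (hk : 0 < k) (hc : 0 < c) (hy : 0 < y)
    (h : t < -(k / c) * log y) : y < exp (-(t * c) / k) := by
  rw [← exp_log hy, exp_lt_exp, lt_div_iff₀ hk]
  have := mul_lt_mul_of_pos_right h hc
  field_simp at this
  linarith

theorem stmt_15_general (ρ ρbar ε : ℝ) (hρ : 0 < ρ) (hρbar : 0 < ρbar)
    (hε2 : ε ^ 2 < -(4 / ρbar) *
        Real.log ((1 / 2) * Real.sqrt ((ρ + 2 * ρbar) / (ρ + ρbar))))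
    (h : ℝ → ℝ)
    (hh : ∀ x : ℝ, h x = (2:ℝ) ^ (x - 1) / Real.sqrt (ρ + ρbar * x)
        * Real.exp (-(ε ^ 2 * (ρ + ρbar * x)) / 4)) :
    ∀ x : ℝ, 1 ≤ x → h x < h (x + 1) := by
  intro x hx
  have hA : ρ + ρbar ≤ ρ + ρbar * x := by nlinarith
  have hApos : 0 < ρ + ρbar * x := by linarith
  have hsq : 0 < √((ρ + 2 * ρbar) / (ρ + ρbar)) := sqrt_pos.mpr (by positivity)
  have hexp : (1 / 2) * √((ρ + 2 * ρbar) / (ρ + ρbar)) < exp (-(ε ^ 2 * ρbar) / 4) :=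
    lt_exp_of_lt_neg_div_mul_log four_pos hρbar (by positivity) hε2
  have hratio : (ρ + ρbar * (x + 1)) / (ρ + ρbar * x) ≤ (ρ + 2 * ρbar) / (ρ + ρbar) := by
    convert add_div_le_add_div_of_le (by positivity) hA hρbar.le using 2 <;> ring
  simp only [hh, ← learningRateSummand.eq_def]
  rw [← one_lt_div (learningRateSummand_pos hApos), learningRateSummand_succ_div hApos,
    one_lt_div (sqrt_pos.mpr (by positivity))]
  calc √((ρ + ρbar * (x + 1)) / (ρ + ρbar * x))
      ≤ √((ρ + 2 * ρbar) / (ρ + ρbar)) := sqrt_le_sqrt hratio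
    _ < 2 * exp (-(ε ^ 2 * ρbar) / 4) := by linarith

/-- Monotonicity of `h` in the binomial tree learning-rate computation: if
`ε² < -(4/ρ̄) ln((1/2)√((ρ + 2ρ̄)/(ρ + ρ̄)))`, then
`h x = 2^{x-1} (ρ + ρ̄x)^{-1/2} e^{-ε²(ρ + ρ̄x)/4}` satisfies `h (x+1) > h x`
for every real `x ≥ 1`. -/
theorem stmt_15 (ρ ρbar ε : ℝ) (hρ : 0 < ρ) (hρbar : 0 < ρbar) (hε : 0 < ε)
    (hε2 : ε ^ 2 < -(4 / ρbar) *
        Real.log ((1 / 2) * Real.sqrt ((ρ + 2 * ρbar) / (ρ + ρbar))))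
    (h : ℝ → ℝ)
    (hh : ∀ x : ℝ, h x = (2:ℝ) ^ (x - 1) / Real.sqrt (ρ + ρbar * x)
        * Real.exp (-(ε ^ 2 * (ρ + ρbar * x)) / 4)) :
    ∀ x : ℝ, 1 ≤ x → h x < h (x + 1) :=
  stmt_15_general ρ ρbar ε hρ hρbar hε2 h hh
end
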